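/- arXiv:2504.00004 — 9 statements merged into one kernel-verified Lean document; each statement's English description precedes it below -/
import Mathlib

section
/- Let f, g : ℕ → ℂ be sequences, let l₁ ≤ u₁ and l₂ ≤ u₂ be natural numbers, and suppose the polynomial identity ∑_{k=l₁}^{u₁} f(k)(1−t)^k = ∑_{k=l₂}^{u₂} g(k) t^k holds for all t ∈ ℂ. Then for all natural numbers r, s with 1 ≤ s ≤ r, one has ∑_{k=l₁}^{u₁} f(k) / C(k+r, s) = (s/(r−s+1)) · ∑_{k=l₂}^{u₂} g(k) / C(k+r, r−s+1). -/
/-!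
Both sides are `s` times the integral of `x ^ (s - 1) * (1 - x) ^ (r - s)` against the two
sides of the polynomial identity at `t = x`, integrated over `[0, 1]`. Each monomial contributes a
Beta integral `∫₀¹ x ^ a * (1 - x) ^ b = a! b! / (a + b + 1)!`, which is the reciprocal of
`(a + 1) * C(a + b + 1, a + 1)`, and also of `(b + 1) * C(a + b + 1, b + 1)`.
-/

open Finset
open scoped Nat

theorem integral_pow_mul_one_sub_pow (a b : ℕ) :
    ∫ x in (0 : ℝ)..1, (x : ℂ) ^ a * (1 - (x : ℂ)) ^ b = a ! * b ! / (a + b + 1)! := by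
  have hΓ := Complex.Gamma_mul_Gamma_eq_betaIntegral (s := a + 1) (t := b + 1)
    (by simp only [Complex.add_re, Complex.natCast_re, Complex.one_re]; positivity)
    (by simp only [Complex.add_re, Complex.natCast_re, Complex.one_re]; positivity)
  rw [show (a + 1 : ℂ) + (b + 1) = ((a + b + 1 : ℕ) : ℂ) + 1 by push_cast; ring,
    Complex.Gamma_nat_eq_factorial, Complex.Gamma_nat_eq_factorial,
    Complex.Gamma_nat_eq_factorial, Complex.betaIntegral] at hΓ
  simp only [add_sub_cancel_right, Complex.cpow_natCast] at hΓ
  rw [hΓ, mul_div_cancel_left₀ _ (by exact_mod_cast (a + b + 1).factorial_ne_zero)]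

theorem factorial_mul_factorial_div_factorial_eq_inv_choose {a b n : ℕ} (h : a + b + 1 = n) :
    (a ! * b ! / n ! : ℂ) = ((a + 1) * n.choose (a + 1) : ℂ)⁻¹ := by
  have hchoose : (n.choose (a + 1) * (a + 1)! * b ! : ℂ) = n ! := by
    rw [← h, show a + b + 1 = a + 1 + b by omega, Nat.choose_symm_add]
    exact_mod_cast Nat.add_choose_mul_factorial_mul_factorial (a + 1) b
  rw [← hchoose, Nat.factorial_succ]
  have := a.factorial_ne_zero
  have := b.factorial_ne_zero
  have : n.choose (a + 1) ≠ 0 := (Nat.choose_pos (by omega)).ne'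
  push_cast
  field_simp

theorem integral_pow_mul_one_sub_pow_eq_inv_choose_left {a b n : ℕ} (h : a + b + 1 = n) :
    ∫ x in (0 : ℝ)..1, (x : ℂ) ^ a * (1 - (x : ℂ)) ^ b = ((a + 1) * n.choose (a + 1) : ℂ)⁻¹ := by
  rw [integral_pow_mul_one_sub_pow, h, factorial_mul_factorial_div_factorial_eq_inv_choose h]

theorem integral_pow_mul_one_sub_pow_eq_inv_choose_right {a b n : ℕ} (h : a + b + 1 = n) :
    ∫ x in (0 : ℝ)..1, (x : ℂ) ^ a * (1 - (x : ℂ)) ^ b = ((b + 1) * n.choose (b + 1) : ℂ)⁻¹ := by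
  rw [integral_pow_mul_one_sub_pow, h, mul_comm (a ! : ℂ),
    factorial_mul_factorial_div_factorial_eq_inv_choose (by omega)]

theorem intervalIntegral.integral_mul_sum_mul {𝕜 ι : Type*} [RCLike 𝕜] (S : Finset ι) (c : ι → 𝕜)
    {w : ℝ → 𝕜} {p : ι → ℝ → 𝕜} (hw : Continuous w) (hp : ∀ i, Continuous (p i)) (a b : ℝ) :
    ∫ x in a..b, w x * ∑ i ∈ S, c i * p i x = ∑ i ∈ S, c i * ∫ x in a..b, w x * p i x := by
  simp only [mul_sum, mul_left_comm (w _)]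
  rw [intervalIntegral.integral_finsetSum (f := fun i x ↦ c i * (w x * p i x))
    fun i _ ↦ (continuous_const.mul (hw.mul (hp i))).intervalIntegrable a b]
  simp only [intervalIntegral.integral_const_mul]

theorem stmt_0_general (f g : ℕ → ℂ) (l₁ u₁ l₂ u₂ : ℕ)
    (hpoly : ∀ t : ℂ, ∑ k ∈ Icc l₁ u₁, f k * (1 - t) ^ k = ∑ k ∈ Icc l₂ u₂, g k * t ^ k)
    (r s : ℕ) (hs : 1 ≤ s) (hsr : s ≤ r) :
    ∑ k ∈ Icc l₁ u₁, f k / (Nat.choose (k + r) s : ℂ) =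
      ((s : ℂ) / (((r - s : ℕ) : ℂ) + 1)) *
        ∑ k ∈ Icc l₂ u₂, g k / (Nat.choose (k + r) (r - s + 1) : ℂ) := by
  set w : ℝ → ℂ := fun x ↦ (x : ℂ) ^ (s - 1) * (1 - (x : ℂ)) ^ (r - s)
  have hw : Continuous w := by fun_prop
  have hleft (k : ℕ) :
      ∫ x in (0 : ℝ)..1, w x * (1 - (x : ℂ)) ^ k = (s * (k + r).choose s : ℂ)⁻¹ := by
    simp only [w, mul_assoc, ← pow_add]
    rw [integral_pow_mul_one_sub_pow_eq_inv_choose_left (n := k + r) (by omega), ← Nat.cast_add_one,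
      Nat.sub_add_cancel hs]
  have hright (k : ℕ) : ∫ x in (0 : ℝ)..1, w x * (x : ℂ) ^ k =
      (((r - s : ℕ) + 1) * (k + r).choose (r - s + 1) : ℂ)⁻¹ := by
    simp only [w, mul_right_comm _ _ ((_ : ℂ) ^ k), ← pow_add]
    rw [integral_pow_mul_one_sub_pow_eq_inv_choose_right (n := k + r) (by omega)]
  have hs₀ : (s : ℂ) ≠ 0 := by exact_mod_cast (by omega : s ≠ 0)
  calc ∑ k ∈ Icc l₁ u₁, f k / ((k + r).choose s : ℂ)
      = s * ∑ k ∈ Icc l₁ u₁, f k * ∫ x in (0 : ℝ)..1, w x * (1 - (x : ℂ)) ^ k := by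
        simp only [hleft, mul_sum]
        refine sum_congr rfl fun k _ ↦ ?_
        field_simp
    _ = s * ∑ k ∈ Icc l₂ u₂, g k * ∫ x in (0 : ℝ)..1, w x * (x : ℂ) ^ k := by
        rw [← intervalIntegral.integral_mul_sum_mul _ _ hw (by fun_prop),
          ← intervalIntegral.integral_mul_sum_mul _ _ hw (by fun_prop)]
        simp only [hpoly]
    _ = _ := by
        simp only [hright, mul_sum]
        refine sum_congr rfl fun k _ ↦ ?_
        field_simp

theorem stmt_0 (f g : ℕ → ℂ) (l₁ u₁ l₂ u₂ : ℕ) (h₁ : l₁ ≤ u₁) (h₂ : l₂ ≤ u₂)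
    (hpoly : ∀ t : ℂ, ∑ k ∈ Icc l₁ u₁, f k * (1 - t) ^ k = ∑ k ∈ Icc l₂ u₂, g k * t ^ k)
    (r s : ℕ) (hs : 1 ≤ s) (hsr : s ≤ r) :
    ∑ k ∈ Icc l₁ u₁, f k / (Nat.choose (k + r) s : ℂ) =
      ((s : ℂ) / (((r - s : ℕ) : ℂ) + 1)) *
        ∑ k ∈ Icc l₂ u₂, g k / (Nat.choose (k + r) (r - s + 1) : ℂ) :=
  stmt_0_general f g l₁ u₁ l₂ u₂ hpoly r s hs hsr
end

section
/- Let n be a natural number, let f, g : ℕ → ℂ be sequences, let l₁ ≤ u₁ ≤ n and l₂ ≤ u₂ be natural numbers, and suppose the polynomial identity ∑_{k=l₁}^{u₁} f(k) t^k (1−t)^{n−k} = ∑_{k=l₂}^{u₂} g(k) t^k holds for all t ∈ ℂ. Then for all natural numbers r, s with 1 ≤ s ≤ r, one has ∑_{k=l₁}^{u₁} f(k) / ((k+s) · C(n+r, k+s)) = ∑_{k=l₂}^{u₂} g(k) / ((k+s) · C(k+r, k+s)). -/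
/-!
Multiply the polynomial identity by the weight `t ^ (s - 1) * (1 - t) ^ (r - s)` and integrate
over `[0, 1]`. By the Beta integral, `∫₀¹ t ^ (m - 1) * (1 - t) ^ (N - m) = 1 / (m * C(N, m))`,
so the term `t ^ k * (1 - t) ^ (n - k)` on the left contributes `1 / ((k + s) * C(n + r, k + s))`,
and the monomial `t ^ k` on the right is the case `n = k` of the same computation.
-/

open Finset
open scoped Nat

theorem integral_pow_pred_mul_one_sub_pow {m N : ℕ} (hm : 1 ≤ m) (hmN : m ≤ N) :
    ∫ x in (0 : ℝ)..1, (x : ℂ) ^ (m - 1) * (1 - (x : ℂ)) ^ (N - m) = 1 / (m * N.choose m) := by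
  obtain ⟨m, rfl⟩ := Nat.exists_eq_add_of_le' hm
  rw [integral_pow_mul_one_sub_pow, Nat.cast_choose ℂ hmN, Nat.add_sub_cancel,
    show m + (N - (m + 1)) + 1 = N by omega, Nat.factorial_succ]
  field_simp
  push_cast
  ring

theorem integral_bernstein_mul_pow_mul_one_sub_pow {k n r s : ℕ} (hkn : k ≤ n) (hs : 1 ≤ s)
    (hsr : s ≤ r) :
    ∫ x in (0 : ℝ)..1, (x : ℂ) ^ k * (1 - (x : ℂ)) ^ (n - k) *
        ((x : ℂ) ^ (s - 1) * (1 - (x : ℂ)) ^ (r - s)) =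
      1 / (((k : ℂ) + s) * (n + r).choose (k + s)) := by
  rw [← Nat.cast_add, ← integral_pow_pred_mul_one_sub_pow (by omega) (by omega)]
  refine intervalIntegral.integral_congr fun x _ => ?_
  rw [show k + s - 1 = k + (s - 1) by omega, show n + r - (k + s) = n - k + (r - s) by omega,
    pow_add, pow_add]
  ring

theorem stmt_1_general (n : ℕ) (f g : ℕ → ℂ) (l₁ u₁ l₂ u₂ : ℕ) (h₁n : u₁ ≤ n)
    (hpoly : ∀ t : ℂ, ∑ k ∈ Icc l₁ u₁, f k * t ^ k * (1 - t) ^ (n - k) =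
      ∑ k ∈ Icc l₂ u₂, g k * t ^ k)
    (r s : ℕ) (hs : 1 ≤ s) (hsr : s ≤ r) :
    ∑ k ∈ Icc l₁ u₁, f k / (((k : ℂ) + s) * (Nat.choose (n + r) (k + s) : ℂ)) =
      ∑ k ∈ Icc l₂ u₂, g k / (((k : ℂ) + s) * (Nat.choose (k + r) (k + s) : ℂ)) := by
  set w : ℝ → ℂ := fun x => (x : ℂ) ^ (s - 1) * (1 - (x : ℂ)) ^ (r - s)
  have hint : ∀ (c : ℂ) (a b : ℕ), IntervalIntegrable
      (fun x : ℝ => c * ((x : ℂ) ^ a * (1 - (x : ℂ)) ^ b * w x)) MeasureTheory.volume 0 1 :=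
    fun c a b => by apply Continuous.intervalIntegrable; fun_prop
  calc ∑ k ∈ Icc l₁ u₁, f k / (((k : ℂ) + s) * (Nat.choose (n + r) (k + s) : ℂ))
      = ∑ k ∈ Icc l₁ u₁, ∫ x in (0 : ℝ)..1,
          f k * ((x : ℂ) ^ k * (1 - (x : ℂ)) ^ (n - k) * w x) := by
        refine sum_congr rfl fun k hk => ?_
        rw [intervalIntegral.integral_const_mul,
          integral_bernstein_mul_pow_mul_one_sub_pow ((mem_Icc.1 hk).2.trans h₁n) hs hsr,
          div_eq_mul_one_div]
    _ = ∫ x in (0 : ℝ)..1, (∑ k ∈ Icc l₂ u₂, g k * (x : ℂ) ^ k) * w x := by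
        rw [← intervalIntegral.integral_finsetSum fun k _ => hint _ _ _]
        refine intervalIntegral.integral_congr fun x _ => ?_
        simp only [← hpoly, sum_mul, mul_assoc]
    _ = ∑ k ∈ Icc l₂ u₂, ∫ x in (0 : ℝ)..1,
          g k * ((x : ℂ) ^ k * (1 - (x : ℂ)) ^ (k - k) * w x) := by
        rw [← intervalIntegral.integral_finsetSum fun k _ => hint _ _ _]
        refine intervalIntegral.integral_congr fun x _ => ?_
        simp only [sum_mul, Nat.sub_self, pow_zero, mul_one, mul_assoc]
    _ = _ := by
        refine sum_congr rfl fun k _ => ?_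
        rw [intervalIntegral.integral_const_mul,
          integral_bernstein_mul_pow_mul_one_sub_pow le_rfl hs hsr]
        ring

theorem stmt_1 (n : ℕ) (f g : ℕ → ℂ) (l₁ u₁ l₂ u₂ : ℕ) (h₁ : l₁ ≤ u₁) (h₁n : u₁ ≤ n)
    (h₂ : l₂ ≤ u₂)
    (hpoly : ∀ t : ℂ, ∑ k ∈ Icc l₁ u₁, f k * t ^ k * (1 - t) ^ (n - k) =
      ∑ k ∈ Icc l₂ u₂, g k * t ^ k)
    (r s : ℕ) (hs : 1 ≤ s) (hsr : s ≤ r) :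
    ∑ k ∈ Icc l₁ u₁, f k / (((k : ℂ) + s) * (Nat.choose (n + r) (k + s) : ℂ)) =
      ∑ k ∈ Icc l₂ u₂, g k / (((k : ℂ) + s) * (Nat.choose (k + r) (k + s) : ℂ)) :=
  stmt_1_general n f g l₁ u₁ l₂ u₂ h₁n hpoly r s hs hsr
end

section
/- For every natural number n and every complex number t, ∑_{k=0}^{n} C(n,k) · H_k^2 · t^k = H_n^2 · (1+t)^n − ∑_{k=1}^{n} ((H_n − 2H_{k−1} + H_{n−k})/k) · (1+t)^{n−k}. -/
/-!
Write `S_n(t) = ∑ₖ C(n,k) H_k² t^k`. Pascal's rule gives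
`S_{n+1}(t) = (1+t) S_n(t) + ∑ₖ C(n,k) (H_{k+1}² - H_k²) t^{k+1}`, and the absorption identity
`C(n,k)/(k+1) = C(n+1,k+1)/(n+1)` turns the correction into `(2 A_{n+1} - G_{n+1})/(n+1)`, where
`A_n = ∑ₖ C(n,k) H_k t^k` and `G_n = ∑_{k ≥ 1} C(n,k) t^k/k`. The same induction evaluates `A` and
`G` in powers of `u = 1 + t`, and the claimed closed form in `u` obeys the same recurrence because of
the partial fraction `1/(k(n+1-k)) = (1/k + 1/(n+1-k))/(n+1)`.
-/

open Finset

noncomputable def H : ℕ → ℝ := fun m => ∑ j ∈ range m, (1 : ℝ) / (j + 1)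

theorem sum_range_succ_choose_mul {R : Type*} [Semiring R] (f : ℕ → R) (n : ℕ) :
    ∑ k ∈ range (n + 2), ((n + 1).choose k : R) * f k =
      ∑ k ∈ range (n + 1), (n.choose k : R) * (f k + f (k + 1)) := by
  have hlow : ∑ k ∈ range (n + 1), (n.choose (k + 1) : R) * f (k + 1) +
      ((n + 1).choose 0 : R) * f 0 = ∑ k ∈ range (n + 1), (n.choose k : R) * f k := by
    rw [sum_range_succ, sum_range_succ' _ n]
    simp
  rw [sum_range_succ' _ (n + 1)]
  simp only [Nat.choose_succ_succ', Nat.cast_add, add_mul, mul_add, sum_add_distrib]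
  rw [add_assoc, hlow, add_comm]

theorem sum_range_succ_choose_mul_pow {R : Type*} [CommRing R] (a : ℕ → R) (t : R) (n : ℕ) :
    ∑ k ∈ range (n + 2), ((n + 1).choose k : R) * a k * t ^ k =
      (1 + t) * ∑ k ∈ range (n + 1), (n.choose k : R) * a k * t ^ k +
        ∑ k ∈ range (n + 1), (n.choose k : R) * (a (k + 1) - a k) * t ^ (k + 1) := by
  simp only [mul_assoc, sum_range_succ_choose_mul (fun k => a k * t ^ k), mul_sum,
    ← sum_add_distrib]
  refine sum_congr rfl fun k _ => ?_
  ring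

section CharZero

variable {K : Type*} [Field K] [CharZero K]

theorem sum_choose_mul_div_succ (f : ℕ → K) (n : ℕ) :
    ∑ k ∈ range (n + 1), (n.choose k : K) * f (k + 1) / (k + 1) =
      (∑ k ∈ range (n + 1), ((n + 1).choose (k + 1) : K) * f (k + 1)) / (n + 1) := by
  rw [sum_div]
  refine sum_congr rfl fun k _ => ?_
  have habsorb : ((n + 1 : ℕ) : K) * n.choose k = (n + 1).choose (k + 1) * ((k + 1 : ℕ) : K) := by
    exact_mod_cast Nat.add_one_mul_choose_eq n k
  push_cast at habsorb
  field_simp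
  linear_combination f (k + 1) * habsorb

theorem sum_choose_mul_pow_succ_div (t : K) (n : ℕ) :
    ∑ k ∈ range (n + 1), (n.choose k : K) * t ^ (k + 1) / (k + 1) =
      ((1 + t) ^ (n + 1) - 1) / (n + 1) := by
  rw [sum_choose_mul_div_succ (t ^ ·), add_comm 1 t, add_pow, sum_range_succ' _ (n + 1)]
  simp [mul_comm]

theorem sum_choose_succ_mul_pow_div (t : K) (n : ℕ) :
    ∑ k ∈ range n, (n.choose (k + 1) : K) * t ^ (k + 1) / (k + 1) =
      ∑ k ∈ range n, (1 + t) ^ (k + 1) / (k + 1) - harmonic n := by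
  induction n with
  | zero => simp
  | succ n ih =>
    simp only [Nat.choose_succ_succ', Nat.cast_add, add_mul, add_div, sum_add_distrib]
    rw [sum_choose_mul_pow_succ_div, sum_range_succ _ n, ih, sum_range_succ]
    push_cast [harmonic_succ, Nat.choose_succ_self]
    ring

theorem sum_choose_mul_harmonic_mul_pow (t : K) (n : ℕ) :
    ∑ k ∈ range (n + 1), (n.choose k : K) * harmonic k * t ^ k =
      harmonic n * (1 + t) ^ n - ∑ k ∈ range n, (1 + t) ^ (n - (k + 1)) / (k + 1) := by
  induction n with
  | zero => simp
  | succ n ih =>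
    have hstep : ∀ k ∈ range (n + 1),
        (n.choose k : K) * ((harmonic (k + 1) : K) - harmonic k) * t ^ (k + 1) =
          n.choose k * t ^ (k + 1) / (k + 1) := by
      intro k _
      push_cast [harmonic_succ]
      ring
    have hshift : ∑ k ∈ range (n + 1), (1 + t) ^ (n + 1 - (k + 1)) / (k + 1) =
        (1 + t) * ∑ k ∈ range n, (1 + t) ^ (n - (k + 1)) / (k + 1) + 1 / (n + 1) := by
      rw [sum_range_succ, mul_sum, Nat.sub_self, pow_zero]
      congr 1
      refine sum_congr rfl fun k hk => ?_
      rw [mul_div_assoc', ← pow_succ', Nat.sub_add_comm (mem_range.mp hk)]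
    rw [sum_range_succ_choose_mul_pow, ih, sum_congr rfl hstep, sum_choose_mul_pow_succ_div, hshift]
    push_cast [harmonic_succ]
    ring

/-- The closed form satisfies the recurrence that Pascal's rule yields for `∑ₖ C(n,k) H_k² t^k`,
once the sums of `sum_choose_mul_harmonic_mul_pow` and `sum_choose_succ_mul_pow_div` are evaluated
(here `u = 1 + t`). -/
theorem harmonic_sq_closed_form_succ (u : K) (n : ℕ) :
    (harmonic (n + 1) : K) ^ 2 * u ^ (n + 1) - ∑ k ∈ range (n + 1),
        ((harmonic (n + 1) : K) - 2 * harmonic k + harmonic (n + 1 - (k + 1))) / (k + 1) *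
          u ^ (n + 1 - (k + 1)) =
      u * ((harmonic n : K) ^ 2 * u ^ n - ∑ k ∈ range n,
        ((harmonic n : K) - 2 * harmonic k + harmonic (n - (k + 1))) / (k + 1) *
          u ^ (n - (k + 1))) +
      (2 * (harmonic (n + 1) * u ^ (n + 1) -
          ∑ k ∈ range (n + 1), u ^ (n + 1 - (k + 1)) / (k + 1)) -
        (∑ k ∈ range (n + 1), u ^ (k + 1) / (k + 1) - harmonic (n + 1))) / (n + 1) := by
  -- With `n = k + 1 + m`, the partial fraction `1/((k+1)(m+1)) = (1/(k+1) + 1/(m+1))/(n+1)`.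
  have hterm : ∀ k ∈ range n,
      ((harmonic (n + 1) : K) - 2 * harmonic k + harmonic (n + 1 - (k + 1))) / (k + 1) *
          u ^ (n + 1 - (k + 1)) =
        u * (((harmonic n : K) - 2 * harmonic k + harmonic (n - (k + 1))) / (k + 1) *
          u ^ (n - (k + 1))) + 2 / (n + 1) * (u ^ (n + 1 - (k + 1)) / (k + 1)) +
        1 / (n + 1) * (u ^ (n - 1 - k + 1) / ((n - 1 - k : ℕ) + 1)) := by
    intro k hk
    obtain ⟨m, rfl⟩ : ∃ m, n = k + 1 + m := ⟨n - (k + 1), by simp at hk; omega⟩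
    rw [show k + 1 + m + 1 - (k + 1) = m + 1 by omega, show k + 1 + m - (k + 1) = m by omega,
      show k + 1 + m - 1 - k = m by omega]
    push_cast [harmonic_succ]
    have hk1 : (k : K) + 1 ≠ 0 := by exact_mod_cast k.succ_ne_zero
    have hm1 : (m : K) + 1 ≠ 0 := by exact_mod_cast m.succ_ne_zero
    have hn1 : (k : K) + 1 + m + 1 ≠ 0 := by exact_mod_cast (k + 1 + m).succ_ne_zero
    field_simp
    ring
  have hreflect : ∑ k ∈ range n, u ^ (n - 1 - k + 1) / ((n - 1 - k : ℕ) + 1 : K) =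
      ∑ k ∈ range n, u ^ (k + 1) / (k + 1) :=
    sum_range_reflect (fun j => u ^ (j + 1) / ((j : K) + 1)) n
  rw [sum_range_succ, sum_congr rfl hterm, sum_add_distrib, sum_add_distrib, ← mul_sum, ← mul_sum,
    ← mul_sum, hreflect, sum_range_succ, sum_range_succ (fun k => u ^ (k + 1) / (k + 1))]
  simp only [Nat.sub_self, pow_zero, harmonic_zero, Nat.add_sub_add_right]
  push_cast [harmonic_succ]
  field_simp
  ring

theorem sum_choose_mul_harmonic_sq_mul_pow_range (t : K) (n : ℕ) :
    ∑ k ∈ range (n + 1), (n.choose k : K) * (harmonic k : K) ^ 2 * t ^ k =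
      (harmonic n : K) ^ 2 * (1 + t) ^ n - ∑ k ∈ range n,
        ((harmonic n : K) - 2 * harmonic k + harmonic (n - (k + 1))) / (k + 1) *
          (1 + t) ^ (n - (k + 1)) := by
  induction n with
  | zero => simp
  | succ n ih =>
    have hstep : ∀ k ∈ range (n + 1),
        (n.choose k : K) * ((harmonic (k + 1) : K) ^ 2 - (harmonic k : K) ^ 2) * t ^ (k + 1) =
          n.choose k * ((2 * harmonic (k + 1) - 1 / (k + 1 : ℕ)) * t ^ (k + 1)) / (k + 1) := by
      intro k _
      have hk1 : (k : K) + 1 ≠ 0 := by exact_mod_cast k.succ_ne_zero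
      push_cast [harmonic_succ]
      field_simp
      ring
    have hsplit : ∑ k ∈ range (n + 1), ((n + 1).choose (k + 1) : K) *
          ((2 * harmonic (k + 1) - 1 / (k + 1 : ℕ)) * t ^ (k + 1)) =
        2 * ∑ k ∈ range (n + 2), ((n + 1).choose k : K) * harmonic k * t ^ k -
          ∑ k ∈ range (n + 1), ((n + 1).choose (k + 1) : K) * t ^ (k + 1) / (k + 1) := by
      rw [sum_range_succ' _ (n + 1)]
      simp only [harmonic_zero, Rat.cast_zero, mul_zero, zero_mul, add_zero]
      rw [mul_sum, ← sum_sub_distrib]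
      refine sum_congr rfl fun k _ => ?_
      push_cast
      ring
    rw [sum_range_succ_choose_mul_pow, ih, sum_congr rfl hstep,
      sum_choose_mul_div_succ (fun j => (2 * harmonic j - 1 / (j : K)) * t ^ j), hsplit,
      sum_choose_mul_harmonic_mul_pow, sum_choose_succ_mul_pow_div, harmonic_sq_closed_form_succ]

theorem sum_choose_mul_harmonic_sq_mul_pow (t : K) (n : ℕ) :
    ∑ k ∈ range (n + 1), (n.choose k : K) * (harmonic k : K) ^ 2 * t ^ k =
      (harmonic n : K) ^ 2 * (1 + t) ^ n - ∑ k ∈ Icc 1 n,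
        ((harmonic n : K) - 2 * harmonic (k - 1) + harmonic (n - k)) / k * (1 + t) ^ (n - k) := by
  rw [← Ico_add_one_right_eq_Icc, sum_Ico_eq_sum_range, sum_choose_mul_harmonic_sq_mul_pow_range]
  simp [add_comm 1]

end CharZero

theorem H_eq_harmonic (m : ℕ) : H m = harmonic m := by
  simp [H, harmonic]

theorem stmt_2 (n : ℕ) (t : ℂ) :
    ∑ k ∈ range (n + 1), (Nat.choose n k : ℂ) * ((H k : ℂ)) ^ 2 * t ^ k =
      ((H n : ℂ)) ^ 2 * (1 + t) ^ n -
        ∑ k ∈ Icc 1 n,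
          (((H n : ℂ) - 2 * (H (k - 1) : ℂ) + (H (n - k) : ℂ)) / (k : ℂ)) * (1 + t) ^ (n - k) := by
  simp only [H_eq_harmonic, Complex.ofReal_ratCast]
  exact sum_choose_mul_harmonic_sq_mul_pow t n
end

section
/- For every natural number n and all natural numbers r, s with 1 ≤ s ≤ r, ∑_{k=1}^{n} (−1)^{k−1} · (C(n,k)/C(k+r, s)) · H_k = (s/(r−s+1)) · ( ∑_{k=1}^{n} 1/(k · C(n−k+r, r−s+1)) − H_n / C(n+r, r−s+1) ), as an identity of real numbers. -/
/-!
Write `F a n = ∑ₖ (-1)^k C(n,k) aₖ` for the binomial transform of a sequence `a`. Pascal's rule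
gives `F a (n+1) = F a n - F (a (· + 1)) n`, and the absorption identity
`C(n,k)/(k+1) = C(n+1,k+1)/(n+1)` handles the increment `1/(k+1)` of `Hₖ`. By induction on `n`,
for all sequences at once, this yields
`F (a · H) n = Hₙ · F a n - ∑_{k=1}^n F a (n-k) / k`.
For `aₖ = 1/C(k+r,s)` the same recursion, now in `(n, r)`, evaluates
`F a n = s / ((r-s+1) C(n+r, r-s+1))`, and the theorem is the general identity for this sequence.
-/

open Finset

lemma H_zero : H 0 = 0 := by simp [H]

lemma H_succ (n : ℕ) : H (n + 1) = H n + 1 / (n + 1) := by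
  simp [H, sum_range_succ]

def binomialTransform (a : ℕ → ℝ) (n : ℕ) : ℝ :=
  ∑ k ∈ range (n + 1), (-1) ^ k * n.choose k * a k

lemma binomialTransform_zero (a : ℕ → ℝ) : binomialTransform a 0 = a 0 := by
  simp [binomialTransform]

lemma binomialTransform_add (a b : ℕ → ℝ) (n : ℕ) :
    binomialTransform (fun k => a k + b k) n = binomialTransform a n + binomialTransform b n := by
  simp only [binomialTransform, ← sum_add_distrib, mul_add]

lemma binomialTransform_succ (a : ℕ → ℝ) (n : ℕ) :
    binomialTransform a (n + 1) =
      binomialTransform a n - binomialTransform (fun k => a (k + 1)) n := by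
  have hF : binomialTransform a n =
      a 0 + ∑ k ∈ range (n + 1), (-1) ^ (k + 1) * n.choose (k + 1) * a (k + 1) := by
    rw [binomialTransform, sum_range_succ', sum_range_succ, Nat.choose_succ_self]
    simp [add_comm]
  rw [binomialTransform, sum_range_succ', hF, binomialTransform]
  simp only [Nat.choose_succ_succ, Nat.cast_add, pow_zero, Nat.choose_zero_right, Nat.cast_one,
    one_mul]
  rw [add_comm, add_sub_assoc, ← sum_sub_distrib]
  congr 1
  exact sum_congr rfl fun k _ => by ring

lemma binomialTransform_shift_div (a : ℕ → ℝ) (n : ℕ) :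
    binomialTransform (fun k => a (k + 1) / (k + 1)) n =
      (a 0 - binomialTransform a (n + 1)) / (n + 1) := by
  have hchoose (k : ℕ) : (n.choose k : ℝ) / (k + 1) = (n + 1).choose (k + 1) / (n + 1) := by
    rw [div_eq_div_iff (by positivity) (by positivity)]
    have := Nat.add_one_mul_choose_eq n k
    exact_mod_cast by linarith
  have hsum : binomialTransform a (n + 1) =
      a 0 - ∑ k ∈ range (n + 1), (-1) ^ k * ((n + 1).choose (k + 1) : ℝ) * a (k + 1) := by
    rw [binomialTransform, sum_range_succ', sub_eq_add_neg, ← sum_neg_distrib]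
    simp [pow_succ, add_comm]
  rw [hsum, sub_sub_cancel, binomialTransform, sum_div]
  refine sum_congr rfl fun k _ => ?_
  linear_combination (-1) ^ k * a (k + 1) * hchoose k

lemma binomialTransform_mul_H (a : ℕ → ℝ) (n : ℕ) :
    binomialTransform (fun k => a k * H k) n =
      H n * binomialTransform a n - ∑ k ∈ Icc 1 n, binomialTransform a (n - k) / k := by
  induction n generalizing a with
  | zero => simp [binomialTransform_zero, H_zero]
  | succ n ih =>
    have hshift : (fun k => a (k + 1) * H (k + 1)) =
        fun k => a (k + 1) * H k + a (k + 1) / (k + 1) := by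
      funext k
      rw [H_succ]
      ring
    have hdiff : ∑ k ∈ Icc 1 n, binomialTransform a (n - k) / k -
        ∑ k ∈ Icc 1 n, binomialTransform (fun k => a (k + 1)) (n - k) / k =
          ∑ k ∈ Icc 1 n, binomialTransform a (n + 1 - k) / k := by
      rw [← sum_sub_distrib]
      refine sum_congr rfl fun k hk => ?_
      rw [← sub_div, ← binomialTransform_succ, show n - k + 1 = n + 1 - k by grind]
    rw [binomialTransform_succ, hshift, binomialTransform_add, binomialTransform_shift_div, ih, ih,
      sum_Icc_succ_top (by omega), H_succ, Nat.sub_self, binomialTransform_zero]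
    push_cast
    linear_combination -hdiff - H n * binomialTransform_succ a n

lemma Nat.mul_choose_eq_mul_choose_sub_add_one {r s : ℕ} (h : s ≤ r) :
    s * r.choose s = (r - s + 1) * r.choose (r - s + 1) := by
  cases s with
  | zero => simp
  | succ t =>
    rw [show r - (t + 1) + 1 = r - t by omega, Nat.choose_symm (show t ≤ r by omega), mul_comm,
      Nat.choose_succ_right_eq, mul_comm]

lemma inv_mul_choose_sub_inv_mul_choose_succ {m N : ℕ} (hm : 1 ≤ m) (hmN : m ≤ N) :
    ((m : ℝ) * N.choose m)⁻¹ - (((m : ℝ) + 1) * (N + 1).choose (m + 1))⁻¹ =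
      ((m : ℝ) * (N + 1).choose m)⁻¹ := by
  have c1 : ((N : ℝ) + 1) * N.choose m = (N + 1).choose (m + 1) * (m + 1) := by
    exact_mod_cast Nat.add_one_mul_choose_eq N m
  have c2 : (N.choose m : ℝ) * (N + 1) = (N + 1).choose m * (N - m + 1) := by
    have := Nat.choose_mul_succ_eq N m
    rw [Nat.succ_sub hmN] at this
    rw [← Nat.cast_sub hmN]
    exact_mod_cast this
  have h0 : (N.choose m : ℝ) ≠ 0 := by exact_mod_cast (Nat.choose_pos hmN).ne'
  have h1 : ((N + 1).choose (m + 1) : ℝ) ≠ 0 := by exact_mod_cast (Nat.choose_pos (by omega)).ne'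
  have h2 : ((N + 1).choose m : ℝ) ≠ 0 := by exact_mod_cast (Nat.choose_pos (by omega)).ne'
  have hm0 : (m : ℝ) ≠ 0 := by positivity
  field_simp
  linear_combination ((N.choose m : ℝ) - (N + 1).choose m) * c1 - (N.choose m : ℝ) * c2

lemma binomialTransform_inv_choose {r s : ℕ} (hs : 1 ≤ s) (hsr : s ≤ r) (n : ℕ) :
    binomialTransform (fun k => ((k + r).choose s : ℝ)⁻¹) n =
      s / ((r - s + 1 : ℕ) * (n + r).choose (r - s + 1)) := by
  induction n generalizing r with
  | zero =>
    rw [binomialTransform_zero, zero_add, ← Nat.cast_mul,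
      ← Nat.mul_choose_eq_mul_choose_sub_add_one hsr, Nat.cast_mul,
      div_mul_cancel_left₀ (by positivity)]
  | succ n ih =>
    have hshift : (fun k => ((k + 1 + r).choose s : ℝ)⁻¹) =
        fun k => ((k + (r + 1)).choose s : ℝ)⁻¹ := by
      simp only [add_right_comm _ 1 r, add_assoc]
    have hk := inv_mul_choose_sub_inv_mul_choose_succ (m := r - s + 1) (N := n + r) (by omega)
      (by omega)
    rw [binomialTransform_succ, hshift, ih hsr, ih (by omega),
      show r + 1 - s + 1 = r - s + 1 + 1 by omega, show n + (r + 1) = n + r + 1 by ring,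
      show n + 1 + r = n + r + 1 by ring]
    simp only [div_eq_mul_inv]
    push_cast at hk ⊢
    linear_combination (s : ℝ) * hk

theorem stmt_5 (n : ℕ) (r s : ℕ) (hs : 1 ≤ s) (hsr : s ≤ r) :
    ∑ k ∈ Icc 1 n, (-1 : ℝ) ^ (k - 1) * ((Nat.choose n k : ℝ) / (Nat.choose (k + r) s : ℝ)) * H k =
      ((s : ℝ) / (((r - s : ℕ) : ℝ) + 1)) *
        (∑ k ∈ Icc 1 n, 1 / ((k : ℝ) * (Nat.choose (n - k + r) (r - s + 1) : ℝ)) -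
          H n / (Nat.choose (n + r) (r - s + 1) : ℝ)) := by
  have hLHS : ∑ k ∈ Icc 1 n, (-1 : ℝ) ^ (k - 1) * ((n.choose k : ℝ) / (k + r).choose s) * H k =
      -binomialTransform (fun k => ((k + r).choose s : ℝ)⁻¹ * H k) n := by
    rw [binomialTransform, range_eq_Ico, sum_eq_sum_Ico_succ_bot (by omega),
      Ico_add_one_right_eq_Icc]
    simp only [H_zero, mul_zero, zero_add, ← sum_neg_distrib]
    refine sum_congr rfl fun k hk => ?_
    obtain ⟨j, rfl⟩ : ∃ j, k = j + 1 := ⟨k - 1, by grind⟩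
    rw [Nat.add_sub_cancel, pow_succ]
    ring
  rw [hLHS, binomialTransform_mul_H, ← Nat.cast_add_one]
  simp only [binomialTransform_inv_choose hs hsr]
  rw [mul_sub, mul_sum, neg_sub]
  congr 1
  · exact sum_congr rfl fun k _ => by ring
  · ring
end

section
/- For every natural number n and all natural numbers r, s with 1 ≤ s ≤ r, ∑_{k=0}^{n} C(n,k) / ((k+2)(k+s) · C(n+r, k+s)) = ∑_{k=0}^{n} (−1)^k · C(n,k) / ((k+1)(k+2)(k+s) · C(k+r, k+s)), as an identity of real numbers. -/
/-!
Regard the left-hand side, with its summation range frozen at `n + 1`, as a function `F` of the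
upper index. Newton's forward-difference formula gives `F n = ∑ C(n,k) Δᵏ F 0`, so it suffices
that `Δᵏ F 0 = (-1)ᵏ / ((k+1)(k+2)(k+s) C(k+r,k+s))`. The engine is the difference rule
`Δ (x ↦ 1 / C(x+b,a)) = -(a/(a+1)) · (x ↦ 1 / C(x+b+1,a+1))`, which iterates to a closed form for
`Δᴹ (1 / C(x+b,a))`. A Leibniz-type rule for `Δᵏ (C(x,j) g(x))` at `0` reduces `Δᵏ F 0` to these
closed forms, and the remaining sum over `j` is `Δᵏ (1 / (x+2))` at `0`, the case `a = 1, b = 2`.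
-/

open Finset fwdDiff

section Ring

lemma fwdDiff_iter_apply_zero_eq_sum {R : Type*} [Ring R] (f : ℕ → R) (n : ℕ) :
    Δ_[1] ^[n] f 0 = ∑ i ∈ range (n + 1), (-1) ^ (n - i) * n.choose i * f i := by
  simp [fwdDiff_iter_eq_sum_shift, zsmul_eq_mul]

variable {R : Type*} [CommRing R]

lemma fwdDiff_iter_choose_mul_apply_zero (g : ℕ → R) (j k : ℕ) :
    Δ_[1] ^[k] (fun x ↦ (x.choose j : R) * g x) 0 =
      k.choose j * Δ_[1] ^[k - j] (fun m ↦ g (m + j)) 0 := by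
  simp only [fwdDiff_iter_apply_zero_eq_sum]
  rcases lt_or_ge k j with hkj | hjk
  · rw [Nat.choose_eq_zero_of_lt hkj, Nat.cast_zero, zero_mul]
    refine sum_eq_zero fun i hi ↦ ?_
    rw [Nat.choose_eq_zero_of_lt (show i < j by grind)]
    simp
  obtain ⟨M, rfl⟩ := Nat.exists_eq_add_of_le hjk
  rw [Nat.add_sub_cancel_left, add_assoc, sum_range_add, mul_sum,
    sum_eq_zero fun i hi ↦ by rw [Nat.choose_eq_zero_of_lt (mem_range.1 hi)]; simp, zero_add]
  refine sum_congr rfl fun m _ ↦ ?_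
  have hchoose := Nat.choose_mul (n := j + M) (k := j + m) (s := j) (by omega)
  rw [Nat.add_sub_cancel_left, Nat.add_sub_cancel_left] at hchoose
  have hcast := congrArg (Nat.cast : ℕ → R) hchoose
  push_cast at hcast
  rw [Nat.add_sub_add_left, add_comm m j]
  linear_combination (-1) ^ (M - m) * g (j + m) * hcast

end Ring

section InvChoose

variable {K : Type*} [Field K] [CharZero K]

lemma fwdDiff_inv_choose {a b : ℕ} (hab : a ≤ b) :
    Δ_[1] (fun x : ℕ ↦ ((x + b).choose a : K)⁻¹) =
      fun x ↦ -(a / (a + 1)) * ((x + b + 1).choose (a + 1) : K)⁻¹ := by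
  ext x
  have hpascal : ((x + b + 1).choose (a + 1) : K) * (a + 1) = (x + b + 1) * (x + b).choose a := by
    exact_mod_cast (Nat.add_one_mul_choose_eq (x + b) a).symm
  have hshift : ((x + b + 1).choose a : K) * (x + b + 1 - a) = (x + b + 1) * (x + b).choose a := by
    have h := congrArg (Nat.cast : ℕ → K) (Nat.choose_mul_succ_eq (x + b) a)
    push_cast [Nat.cast_sub (show a ≤ x + b + 1 by omega)] at h
    linear_combination -h
  have h0 : ((x + b).choose a : K) ≠ 0 := Nat.cast_ne_zero.2 (Nat.choose_pos (by omega)).ne'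
  have h1 : ((x + b + 1).choose a : K) ≠ 0 := Nat.cast_ne_zero.2 (Nat.choose_pos (by omega)).ne'
  have h2 : ((x + b + 1).choose (a + 1) : K) ≠ 0 := Nat.cast_ne_zero.2 (Nat.choose_pos (by omega)).ne'
  simp only [fwdDiff, add_right_comm x 1 b]
  field_simp
  linear_combination (((x + b).choose a : K) - (x + b + 1).choose a) * hpascal
    - ((x + b).choose a : K) * hshift

lemma fwdDiff_iter_inv_choose {a b : ℕ} (ha : 0 < a) (hab : a ≤ b) (M : ℕ) :
    Δ_[1] ^[M] (fun x : ℕ ↦ ((x + b).choose a : K)⁻¹) =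
      fun x ↦ (-1) ^ M * (a / (a + M)) * ((x + b + M).choose (a + M) : K)⁻¹ := by
  induction M generalizing a b with
  | zero =>
    have : (a : K) ≠ 0 := by exact_mod_cast ha.ne'
    simp [this]
  | succ M ih =>
    rw [Function.iterate_succ_apply, fwdDiff_inv_choose hab]
    have hsmul : (fun x : ℕ ↦ -((a : K) / (a + 1)) * ((x + b + 1).choose (a + 1) : K)⁻¹) =
        (-((a : K) / (a + 1))) • fun x : ℕ ↦ ((x + (b + 1)).choose (a + 1) : K)⁻¹ := rfl
    rw [hsmul, fwdDiff_iter_const_smul, ih (by omega) (by omega)]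
    ext x
    simp only [Pi.smul_apply, smul_eq_mul, add_assoc, add_comm 1 M]
    push_cast
    field_simp
    ring

end InvChoose

lemma fwdDiff_iter_inv_add_two_apply_zero (k : ℕ) :
    Δ_[1] ^[k] (fun x : ℕ ↦ ((x : ℝ) + 2)⁻¹) 0 = (-1) ^ k / (((k : ℝ) + 1) * ((k : ℝ) + 2)) := by
  have h := congrFun (fwdDiff_iter_inv_choose (K := ℝ) (a := 1) (b := 2) one_pos one_le_two k) 0
  rw [zero_add, show 2 + k = k + 1 + 1 by omega, add_comm 1 k, Nat.choose_succ_self_right] at h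
  simp only [Nat.choose_one_right] at h
  push_cast at h
  rw [h]
  field_simp
  ring

lemma fwdDiff_iter_sum_choose_div_choose_apply_zero {r s N k : ℕ} (hs : 1 ≤ s) (hsr : s ≤ r)
    (hkN : k < N) :
    Δ_[1] ^[k] (fun x : ℕ ↦ ∑ j ∈ range N,
        (x.choose j : ℝ) / (((j : ℝ) + 2) * ((j : ℝ) + s) * ((x + r).choose (j + s) : ℝ))) 0 =
      (-1) ^ k / (((k : ℝ) + 1) * ((k : ℝ) + 2) * ((k : ℝ) + s) * ((k + r).choose (k + s) : ℝ)) := by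
  have hterm : ∀ j ≤ k, Δ_[1] ^[k - j] (fun m : ℕ ↦
      (((j : ℝ) + 2) * ((j : ℝ) + s) * ((m + j + r).choose (j + s) : ℝ))⁻¹) 0 =
        (-1) ^ (k - j) / (((j : ℝ) + 2) * ((k : ℝ) + s) * ((k + r).choose (k + s) : ℝ)) := by
    intro j hj
    have h := congrFun (fwdDiff_iter_inv_choose (K := ℝ) (a := j + s) (b := j + r)
      (by omega) (by omega) (k - j)) 0
    rw [← Nat.cast_add, show 0 + (j + r) + (k - j) = k + r by omega,
      show j + s + (k - j) = k + s by omega] at h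
    have hfun : (fun m : ℕ ↦
        (((j : ℝ) + 2) * ((j : ℝ) + s) * ((m + j + r).choose (j + s) : ℝ))⁻¹) =
        (((j : ℝ) + 2) * ((j : ℝ) + s))⁻¹ • fun m : ℕ ↦ ((m + (j + r)).choose (j + s) : ℝ)⁻¹ := by
      ext m
      simp [add_assoc, mul_comm]
    rw [hfun, fwdDiff_iter_const_smul, Pi.smul_apply, h, smul_eq_mul]
    have hjs : (j : ℝ) + s ≠ 0 := by positivity
    have hks : (k : ℝ) + s ≠ 0 := by positivity
    have hchoose : ((k + r).choose (k + s) : ℝ) ≠ 0 :=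
      Nat.cast_ne_zero.2 (Nat.choose_pos (by omega)).ne'
    push_cast
    field_simp
  have hks : (k : ℝ) + s ≠ 0 := by positivity
  have hchoose : ((k + r).choose (k + s) : ℝ) ≠ 0 :=
    Nat.cast_ne_zero.2 (Nat.choose_pos (by omega)).ne'
  calc _ = ∑ j ∈ range N, (k.choose j : ℝ) * Δ_[1] ^[k - j] (fun m : ℕ ↦
        (((j : ℝ) + 2) * ((j : ℝ) + s) * ((m + j + r).choose (j + s) : ℝ))⁻¹) 0 := by
        rw [← sum_fn, fwdDiff_iter_finsetSum, Finset.sum_apply]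
        refine sum_congr rfl fun j _ ↦ ?_
        exact fwdDiff_iter_choose_mul_apply_zero
          (fun x ↦ (((j : ℝ) + 2) * ((j : ℝ) + s) * ((x + r).choose (j + s) : ℝ))⁻¹) j k
    _ = ∑ j ∈ range (k + 1), (k.choose j : ℝ) *
          ((-1) ^ (k - j) / (((j : ℝ) + 2) * ((k : ℝ) + s) * ((k + r).choose (k + s) : ℝ))) := by
        rw [← sum_subset (range_subset_range.2 hkN) fun j _ hj ↦ by
          rw [Nat.choose_eq_zero_of_lt (by simpa using hj), Nat.cast_zero, zero_mul]]
        exact sum_congr rfl fun j hj ↦ by rw [hterm j (Nat.lt_succ_iff.1 (mem_range.1 hj))]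
    _ = (((k : ℝ) + s) * (k + r).choose (k + s))⁻¹ *
          Δ_[1] ^[k] (fun x : ℕ ↦ ((x : ℝ) + 2)⁻¹) 0 := by
        rw [fwdDiff_iter_apply_zero_eq_sum, mul_sum]
        refine sum_congr rfl fun j _ ↦ ?_
        field_simp
    _ = _ := by
        rw [fwdDiff_iter_inv_add_two_apply_zero]
        field_simp

theorem stmt_14 (n : ℕ) (r s : ℕ) (hs : 1 ≤ s) (hsr : s ≤ r) :
    ∑ k ∈ range (n + 1),
        (Nat.choose n k : ℝ) /
          (((k : ℝ) + 2) * ((k : ℝ) + s) * (Nat.choose (n + r) (k + s) : ℝ)) =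
      ∑ k ∈ range (n + 1),
        (-1 : ℝ) ^ k * (Nat.choose n k : ℝ) /
          (((k : ℝ) + 1) * ((k : ℝ) + 2) * ((k : ℝ) + s) * (Nat.choose (k + r) (k + s) : ℝ)) := by
  have hnewton := shift_eq_sum_fwdDiff_iter 1 (fun x : ℕ ↦ ∑ j ∈ range (n + 1),
    (x.choose j : ℝ) / (((j : ℝ) + 2) * ((j : ℝ) + s) * ((x + r).choose (j + s) : ℝ))) n 0
  rw [zero_add, smul_eq_mul, mul_one] at hnewton
  rw [hnewton]
  refine sum_congr rfl fun k hk ↦ ?_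
  rw [nsmul_eq_mul, fwdDiff_iter_sum_choose_div_choose_apply_zero hs hsr (mem_range.1 hk)]
  ring
end

section
/- For every natural number n and every natural number r ≥ 1, ∑_{k=0}^{n} (−1)^k · C(n,k) / ((k+1)(k+2)(k+r)) = ( 1 / ∏_{j=1}^{r} (n+j) ) · ∑_{k=0}^{n} ( ∏_{j=1}^{r−1} (k+j) ) / (k+2), as an identity of real numbers, where the inner product ∏_{j=1}^{r−1}(k+j) equals 1 when r = 1. -/
/-!
Write `S(N, a) = ∑_{j ≤ N} (-1)^j C(N,j) / (a + j)`; by Pascal's rule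
`S(N+1, a) = S(N, a) - S(N, a+1)`, whence `S(N, a) = N! / (a (a+1) ⋯ (a+N))`.
With `r = s + 1`, this gives `∏_{1 ≤ j ≤ s} (k+j) / ∏_{1 ≤ j ≤ r} (n+j) = C(n,k) S(n-k, k+r)`.
Substituting into the right-hand side and exchanging the order of summation (`m = k + j`),
`C(n,k) C(n-k,m-k) = C(n,m) C(m,k)` turns the inner sum into
`(-1)^m C(n,m) / (m+r) · S(m, 2)`, and `S(m, 2) = 1 / ((m+1)(m+2))`.
-/

open Finset Nat

theorem sum_range_succ_neg_one_pow_mul_choose_mul {R : Type*} [CommRing R] (N : ℕ)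
    (g : ℕ → R) :
    ∑ j ∈ range (N + 2), (-1) ^ j * ((N + 1).choose j : R) * g j =
      ∑ j ∈ range (N + 1), (-1) ^ j * (N.choose j : R) * (g j - g (j + 1)) := by
  have hshift := sum_range_succ' (fun j ↦ (-1) ^ j * (N.choose j : R) * g j) (N + 1)
  simp only [sum_range_succ _ (N + 1), Nat.choose_succ_self, Nat.choose_zero_right, pow_succ,
    pow_zero, mul_neg, mul_one, one_mul, neg_mul, sum_neg_distrib, cast_zero, cast_one, mul_zero,
    zero_mul, add_zero] at hshift
  simp only [Nat.choose_succ_succ', Nat.cast_add, mul_add, add_mul, mul_sub, sum_sub_distrib,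
    sum_add_distrib, sum_range_succ' _ (N + 1), Nat.choose_zero_right, pow_succ, pow_zero, mul_neg,
    mul_one, one_mul, neg_mul, sum_neg_distrib, cast_one]
  linear_combination -hshift

section

variable {K : Type*} [Field K]

theorem sum_range_neg_one_pow_mul_choose_div (N : ℕ) {a : K}
    (ha : ∀ i ∈ range (N + 1), a + i ≠ 0) :
    ∑ j ∈ range (N + 1), (-1) ^ j * (N.choose j : K) / (a + j) =
      N ! / ∏ i ∈ range (N + 1), (a + i) := by
  induction N generalizing a with
  | zero => simp
  | succ N ih =>
    have ha₀ : ∀ i ∈ range (N + 1), a + i ≠ 0 := fun i hi ↦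
      ha i (by simp only [mem_range] at hi ⊢; omega)
    have ha₁ : ∀ i ∈ range (N + 1), a + 1 + i ≠ 0 := fun i hi ↦ by
      simpa [add_assoc, add_comm (1 : K)] using ha (i + 1) (by simpa using hi)
    have hrec : ∑ j ∈ range (N + 2), (-1) ^ j * ((N + 1).choose j : K) / (a + j) =
        ∑ j ∈ range (N + 1), (-1) ^ j * (N.choose j : K) / (a + j) -
          ∑ j ∈ range (N + 1), (-1) ^ j * (N.choose j : K) / (a + 1 + j) := by
      simp only [div_eq_mul_inv, sum_range_succ_neg_one_pow_mul_choose_mul, mul_sub,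
        sum_sub_distrib, Nat.cast_succ, add_assoc, add_comm (1 : K)]
    have hprod :
        ∏ i ∈ range (N + 2), (a + i) = (∏ i ∈ range (N + 1), (a + i)) * (a + (N + 1)) := by
      rw [prod_range_succ]; push_cast; rfl
    have hprod' : ∏ i ∈ range (N + 2), (a + i) = a * ∏ i ∈ range (N + 1), (a + 1 + i) := by
      rw [prod_range_succ', mul_comm]
      simp [add_assoc, add_comm (1 : K)]
    have haN : a + (N + 1) ≠ 0 := by simpa using ha (N + 1) (by simp)
    rw [hrec, ih ha₀, ih ha₁, hprod]
    field_simp [prod_ne_zero_iff.2 ha₀, prod_ne_zero_iff.2 ha₁]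
    push_cast [Nat.factorial_succ]
    linear_combination -(N ! : K) * (hprod.symm.trans hprod')

variable [CharZero K]

theorem prod_range_add_eq_factorial_div (c m : ℕ) :
    ∏ i ∈ range m, ((c : K) + 1 + i) = (c + m)! / c ! := by
  rw [eq_div_iff (by simp [factorial_ne_zero]), ← factorial_mul_ascFactorial,
    ascFactorial_eq_prod_range]
  push_cast
  ring

theorem prod_Icc_add_eq_factorial_div (c s : ℕ) :
    ∏ j ∈ Icc 1 s, ((c : K) + j) = (c + s)! / c ! := by
  rw [← prod_range_add_eq_factorial_div, ← Ico_add_one_right_eq_Icc, prod_Ico_eq_prod_range,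
    Nat.add_sub_cancel]
  push_cast
  simp only [add_assoc]

theorem sum_range_neg_one_pow_mul_choose_div_two_add (m : ℕ) :
    ∑ k ∈ range (m + 1), (-1) ^ k * (m.choose k : K) / (2 + k) = 1 / ((m + 1) * (m + 2)) := by
  have h := prod_range_add_eq_factorial_div (K := K) 1 (m + 1)
  rw [Nat.add_comm 1, factorial_succ, factorial_succ] at h
  norm_num [add_assoc, one_add_one_eq_two] at h
  have hm2 : (m : K) + 2 ≠ 0 := by norm_cast
  rw [sum_range_neg_one_pow_mul_choose_div m fun i _ ↦ by norm_cast; omega, h]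
  field_simp [factorial_ne_zero]

theorem prod_Icc_add_div_prod_Icc_add {k n : ℕ} (hk : k ≤ n) (s : ℕ) :
    (∏ j ∈ Icc 1 s, ((k : K) + j)) / ∏ j ∈ Icc 1 (s + 1), ((n : K) + j) =
      n.choose k *
        ∑ j ∈ range (n - k + 1), (-1) ^ j * ((n - k).choose j : K) / (k + s + 1 + j) := by
  have hS := prod_range_add_eq_factorial_div (K := K) (k + s) (n - k + 1)
  rw [show k + s + (n - k + 1) = n + (s + 1) by omega] at hS
  push_cast at hS
  have hC : (n.choose k : K) * k ! * (n - k)! = n ! := by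
    exact_mod_cast choose_mul_factorial_mul_factorial hk
  rw [sum_range_neg_one_pow_mul_choose_div _ fun i _ ↦ by norm_cast; omega, hS,
    prod_Icc_add_eq_factorial_div, prod_Icc_add_eq_factorial_div, ← hC]
  field_simp [factorial_ne_zero]

theorem sum_range_choose_mul_choose_div (m n s : ℕ) :
    ∑ k ∈ range (m + 1), (n.choose k : K) / (k + 2) *
        ((-1) ^ (m - k) * ((n - k).choose (m - k) : K) / (k + s + 1 + (m - k : ℕ))) =
      (-1) ^ m * n.choose m / ((m + 1) * (m + 2) * (m + (s + 1 : ℕ))) := by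
  have hterm : ∀ k ∈ range (m + 1), (n.choose k : K) / (k + 2) *
        ((-1) ^ (m - k) * ((n - k).choose (m - k) : K) / (k + s + 1 + (m - k : ℕ))) =
      (-1) ^ m * n.choose m / (m + (s + 1 : ℕ)) * ((-1) ^ k * (m.choose k : K) / (2 + k)) := by
    intro k hk
    have hkm : k ≤ m := Nat.lt_succ_iff.1 (mem_range.1 hk)
    have hC : (n.choose k : K) * (n - k).choose (m - k) = n.choose m * m.choose k := by
      exact_mod_cast (choose_mul hkm).symm
    have hsign : (-1 : K) ^ m = (-1) ^ (m - k) * (-1) ^ k := by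
      rw [← pow_add, Nat.sub_add_cancel hkm]
    have hsq : (-1 : K) ^ k * (-1) ^ k = 1 := by rw [← mul_pow]; norm_num
    rw [Nat.cast_sub hkm, hsign]
    push_cast
    linear_combination (-1 : K) ^ (m - k) / (k + 2) / (m + s + 1) *
      (hC - (n.choose m : K) * m.choose k * hsq)
  rw [sum_congr rfl hterm, ← mul_sum, sum_range_neg_one_pow_mul_choose_div_two_add]
  field_simp

end

theorem stmt_15 (n : ℕ) (r : ℕ) (hr : 1 ≤ r) :
    ∑ k ∈ range (n + 1),
        (-1 : ℝ) ^ k * (Nat.choose n k : ℝ) / (((k : ℝ) + 1) * ((k : ℝ) + 2) * ((k : ℝ) + r)) =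
      (1 / ∏ j ∈ Icc 1 r, ((n : ℝ) + j)) *
        ∑ k ∈ range (n + 1), (∏ j ∈ Icc 1 (r - 1), ((k : ℝ) + j)) / ((k : ℝ) + 2) := by
  obtain ⟨s, rfl⟩ := Nat.exists_eq_add_of_le' hr
  let T (k j : ℕ) : ℝ :=
    n.choose k / (k + 2) * ((-1) ^ j * ((n - k).choose j : ℝ) / (k + s + 1 + j))
  calc _ = ∑ m ∈ range (n + 1), ∑ k ∈ range (m + 1), T k (m - k) :=
        sum_congr rfl fun m _ ↦ (sum_range_choose_mul_choose_div m n s).symm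
    _ = ∑ k ∈ range (n + 1), ∑ j ∈ range (n + 1 - k), T k j := sum_range_diag_flip _ _
    _ = _ := by
      rw [mul_sum]
      refine sum_congr rfl fun k hk ↦ ?_
      have hkn : k ≤ n := mem_range_succ_iff.1 hk
      rw [Nat.add_sub_cancel, ← mul_sum, show n + 1 - k = n - k + 1 by omega]
      linear_combination -prod_Icc_add_div_prod_Icc_add (K := ℝ) hkn s / (k + 2)
end

section
/- For every natural number n and every complex number t, ∑_{k=0}^{n} (−1)^k · 4^k · C(n+k, n−k) · t^k = ∑_{k=0}^{n} (−1)^{n−k} · C(2n+1, 2k+1) · (1−t)^k · t^{n−k}. -/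
/-!
Put `t = -s ^ 2` and `1 - t = c ^ 2`, so that `c ^ 2 - s ^ 2 = 1`. Then both sides equal
`((c + s) ^ (2n+1) + (c - s) ^ (2n+1)) / (2c)`. For the right side this is the part of the
binomial expansion that is odd in `c`. The left side is the Morgan–Voyce polynomial `b_n(-4t)`,
and both it and the closed form satisfy `y (n+2) = (2 - 4t) y (n+1) - y n`: the numbers
`(c ± s) ^ 2` have sum `2 + 4 s ^ 2 = 2 - 4t` and product `1`. The point `t = 1`, where `c = 0`,
follows by continuity.
-/

open Finset

theorem Nat.choose_add_two_add_choose (m j : ℕ) :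
    (m + 2).choose (j + 2) + m.choose (j + 2) = 2 * (m + 1).choose (j + 2) + m.choose j := by
  rw [Nat.choose_succ_succ (m + 1) (j + 1), Nat.choose_succ_succ m j,
    Nat.choose_succ_succ m (j + 1)]
  ring

theorem Finset.sum_range_two_mul {M : Type*} [AddCommMonoid M] (n : ℕ) (f : ℕ → M) :
    ∑ j ∈ range (2 * n), f j = ∑ k ∈ range n, (f (2 * k) + f (2 * k + 1)) := by
  induction n with
  | zero => simp
  | succ n ih =>
    rw [Nat.mul_succ, sum_range_succ, sum_range_succ, ih, sum_range_succ _ n, add_assoc]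

theorem add_pow_add_sub_pow_two_mul_add_one {R : Type*} [CommRing R] (c s : R) (n : ℕ) :
    (c + s) ^ (2 * n + 1) + (c - s) ^ (2 * n + 1)
      = 2 * c * ∑ k ∈ range (n + 1),
          ((2 * n + 1).choose (2 * k + 1) : R) * (c ^ 2) ^ k * (s ^ 2) ^ (n - k) := by
  rw [sub_eq_add_neg, add_pow, add_pow, ← sum_add_distrib,
    show 2 * n + 1 + 1 = 2 * (n + 1) by ring, sum_range_two_mul, mul_sum]
  refine sum_congr rfl fun k hk => ?_
  have hk : k ≤ n := Nat.lt_succ_iff.mp (mem_range.mp hk)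
  rw [show 2 * n + 1 - 2 * k = 2 * (n - k) + 1 by omega,
    show 2 * n + 1 - (2 * k + 1) = 2 * (n - k) by omega,
    Odd.neg_pow ⟨n - k, rfl⟩, Even.neg_pow ⟨n - k, two_mul _⟩]
  ring

def morganVoyce {R : Type*} [CommSemiring R] (n : ℕ) (x : R) : R :=
  ∑ k ∈ range (n + 1), ((n + k).choose (2 * k) : R) * x ^ k

section MorganVoyce

variable {R : Type*} [CommSemiring R]

theorem morganVoyce_zero (x : R) : morganVoyce 0 x = 1 := by
  simp [morganVoyce]

theorem morganVoyce_one (x : R) : morganVoyce 1 x = 1 + x := by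
  simp [morganVoyce, sum_range_succ]

theorem morganVoyce_eq_sum_range_of_le {n N : ℕ} (h : n + 1 ≤ N) (x : R) :
    morganVoyce n x = ∑ k ∈ range N, ((n + k).choose (2 * k) : R) * x ^ k := by
  refine sum_subset (range_subset_range.2 h) fun k _ hk => ?_
  rw [Nat.choose_eq_zero_of_lt (by simp at hk; omega), Nat.cast_zero, zero_mul]

theorem morganVoyce_add_two (n : ℕ) (x : R) :
    morganVoyce (n + 2) x + morganVoyce n x = (x + 2) * morganVoyce (n + 1) x := by
  have hterm (k : ℕ) :
      ((n + 2 + (k + 1)).choose (2 * (k + 1)) : R) * x ^ (k + 1)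
        + ((n + (k + 1)).choose (2 * (k + 1)) : R) * x ^ (k + 1)
      = x * (((n + 1 + k).choose (2 * k) : R) * x ^ k)
        + 2 * (((n + 1 + (k + 1)).choose (2 * (k + 1)) : R) * x ^ (k + 1)) := by
    rw [show n + 2 + (k + 1) = n + 1 + k + 2 by ring, show n + (k + 1) = n + 1 + k by ring,
      show n + 1 + (k + 1) = n + 1 + k + 1 by ring, show 2 * (k + 1) = 2 * k + 2 by ring,
      ← add_mul, ← Nat.cast_add, Nat.choose_add_two_add_choose]
    push_cast
    ring
  calc morganVoyce (n + 2) x + morganVoyce n x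
      = ∑ k ∈ range (n + 3), (((n + 2 + k).choose (2 * k) : R) * x ^ k
          + ((n + k).choose (2 * k) : R) * x ^ k) := by
        rw [morganVoyce_eq_sum_range_of_le (N := n + 3) le_rfl,
          morganVoyce_eq_sum_range_of_le (N := n + 3) (by omega), sum_add_distrib]
    _ = ∑ k ∈ range (n + 2), (x * (((n + 1 + k).choose (2 * k) : R) * x ^ k)
          + 2 * (((n + 1 + (k + 1)).choose (2 * (k + 1)) : R) * x ^ (k + 1))) + 2 := by
        rw [sum_range_succ']
        simp only [hterm]
        norm_num [one_add_one_eq_two]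
    _ = x * ∑ k ∈ range (n + 2), ((n + 1 + k).choose (2 * k) : R) * x ^ k
          + 2 * ∑ k ∈ range (n + 3), ((n + 1 + k).choose (2 * k) : R) * x ^ k := by
        rw [sum_add_distrib, ← mul_sum, ← mul_sum, sum_range_succ' _ (n + 2)]
        simp only [add_zero, mul_zero, Nat.choose_zero_right, Nat.cast_one, pow_zero, mul_one]
        ring
    _ = (x + 2) * morganVoyce (n + 1) x := by
        rw [← morganVoyce_eq_sum_range_of_le le_rfl,
          ← morganVoyce_eq_sum_range_of_le (by omega)]
        ring

end MorganVoyce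

theorem two_mul_mul_morganVoyce_four_mul_sq {R : Type*} [CommRing R] {c s : R}
    (h : c ^ 2 - s ^ 2 = 1) (n : ℕ) :
    2 * c * morganVoyce n (4 * s ^ 2) = (c + s) ^ (2 * n + 1) + (c - s) ^ (2 * n + 1) := by
  induction n using Nat.twoStepInduction with
  | zero => rw [morganVoyce_zero]; ring
  | one => rw [morganVoyce_one]; linear_combination (-2 * c) * h
  | more n ih₀ ih₁ =>
    linear_combination 2 * c * morganVoyce_add_two n (4 * s ^ 2) + (4 * s ^ 2 + 2) * ih₁ - ih₀
      + ((c ^ 2 - s ^ 2 + 1) * ((c + s) ^ (2 * n + 1) + (c - s) ^ (2 * n + 1))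
        - 2 * ((c + s) ^ (2 * (n + 1) + 1) + (c - s) ^ (2 * (n + 1) + 1))) * h

theorem morganVoyce_neg_four_mul (n : ℕ) (t : ℂ) :
    morganVoyce n (-4 * t)
      = ∑ k ∈ range (n + 1),
          ((2 * n + 1).choose (2 * k + 1) : ℂ) * (1 - t) ^ k * (-t) ^ (n - k) := by
  revert t
  rw [← funext_iff]
  refine Continuous.ext_on (dense_compl_singleton 1) (by unfold morganVoyce; fun_prop)
    (by fun_prop) fun t (ht : t ≠ 1) => ?_
  obtain ⟨s, hs⟩ := IsAlgClosed.exists_pow_nat_eq (-t) two_pos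
  obtain ⟨c, hc⟩ := IsAlgClosed.exists_pow_nat_eq (1 - t) two_pos
  have hc₀ : 2 * c ≠ 0 :=
    mul_ne_zero two_ne_zero fun hc₀ => ht (by rw [hc₀] at hc; linear_combination hc)
  have h := two_mul_mul_morganVoyce_four_mul_sq (c := c) (s := s) (by rw [hc, hs]; ring) n
  rw [add_pow_add_sub_pow_two_mul_add_one, hs, hc, show 4 * -t = -4 * t by ring] at h
  exact mul_left_cancel₀ hc₀ h

theorem stmt_16 (n : ℕ) (t : ℂ) :
    ∑ k ∈ range (n + 1), (-1 : ℂ) ^ k * 4 ^ k * (Nat.choose (n + k) (n - k) : ℂ) * t ^ k =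
      ∑ k ∈ range (n + 1),
        (-1 : ℂ) ^ (n - k) * (Nat.choose (2 * n + 1) (2 * k + 1) : ℂ) * (1 - t) ^ k * t ^ (n - k) := by
  calc _ = morganVoyce n (-4 * t) := by
        refine sum_congr rfl fun k hk => ?_
        have hk : n + k = 2 * k + (n - k) := by have := mem_range.mp hk; omega
        rw [← Nat.choose_symm_of_eq_add hk, mul_pow, neg_pow (4 : ℂ)]
        ring
    _ = _ := by
        rw [morganVoyce_neg_four_mul]
        exact sum_congr rfl fun k _ => by ring
end

section
/- For every natural number n ≥ 1, ∑_{k=0}^{n} (−1)^{n−k} · C(2n+1, 2k+1) / C(n, k) = ((−1)^n · (2n+1) − 1) / (2n), as an identity of real numbers. -/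
open Finset

/-! Write `r k = C(2n+1, 2k+1) / C(n, k)`. Comparing consecutive binomial coefficients gives the
first-order recurrence `(2k+3) r (k+1) = (2n-2k-1) r k`, which says exactly that
`2n (-1)^(n-k) r k = G k - G (k+1)` for `G k = (2k+1) (-1)^(n-k) r k`. Hence the sum over `k < n`
telescopes to `(G 0 - G n) / 2n`, and the last term `k = n` equals `1`. -/

theorem choose_two_mul_add_two_mul_choose_eq (n k : ℕ) :
    (2 * n + 1).choose (2 * k + 2) * n.choose k =
      (2 * n + 1).choose (2 * k + 1) * n.choose (k + 1) := by
  have hbig := Nat.choose_succ_right_eq (2 * n + 1) (2 * k + 1)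
  have hsmall := Nat.choose_succ_right_eq n k
  rw [show 2 * n + 1 - (2 * k + 1) = 2 * (n - k) by omega] at hbig
  apply Nat.eq_of_mul_eq_mul_right (show 0 < 2 * (k + 1) by omega)
  calc (2 * n + 1).choose (2 * k + 2) * n.choose k * (2 * (k + 1))
      = (2 * n + 1).choose (2 * k + 1) * (2 * (n - k)) * n.choose k := by rw [← hbig]; ring
    _ = 2 * (2 * n + 1).choose (2 * k + 1) * (n.choose (k + 1) * (k + 1)) := by
      rw [hsmall]; ring
    _ = (2 * n + 1).choose (2 * k + 1) * n.choose (k + 1) * (2 * (k + 1)) := by ring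

noncomputable def oddChooseRatio (n k : ℕ) : ℝ :=
  ((2 * n + 1).choose (2 * k + 1) : ℝ) / n.choose k

theorem oddChooseRatio_succ (n k : ℕ) (hk : k < n) :
    (2 * k + 3) * oddChooseRatio n (k + 1) = (2 * n - 2 * k - 1) * oddChooseRatio n k := by
  have hnext := Nat.choose_succ_right_eq (2 * n + 1) (2 * k + 2)
  rw [show 2 * n + 1 - (2 * k + 2) = 2 * (n - k) - 1 by omega] at hnext
  have hnext' : ((2 * n + 1).choose (2 * k + 3) : ℝ) * (2 * k + 3) =
      (2 * n + 1).choose (2 * k + 2) * (2 * n - 2 * k - 1) := by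
    have := congrArg (Nat.cast : ℕ → ℝ) hnext
    push_cast [Nat.cast_sub (show 1 ≤ 2 * (n - k) by omega), Nat.cast_sub hk.le] at this
    linarith
  have hmid : ((2 * n + 1).choose (2 * k + 2) * n.choose k : ℝ) =
      (2 * n + 1).choose (2 * k + 1) * n.choose (k + 1) := by
    exact_mod_cast choose_two_mul_add_two_mul_choose_eq n k
  have hk0 : (n.choose k : ℝ) ≠ 0 := by exact_mod_cast (Nat.choose_pos hk.le).ne'
  have hk1 : (n.choose (k + 1) : ℝ) ≠ 0 := by exact_mod_cast (Nat.choose_pos hk).ne'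
  unfold oddChooseRatio
  rw [show 2 * (k + 1) + 1 = 2 * k + 3 by ring]
  field_simp
  linear_combination (n.choose k : ℝ) * hnext' + (2 * n - 2 * k - 1 : ℝ) * hmid

theorem oddChooseRatio_zero (n : ℕ) : oddChooseRatio n 0 = 2 * n + 1 := by
  simp [oddChooseRatio]

theorem oddChooseRatio_self (n : ℕ) : oddChooseRatio n n = 1 := by
  simp [oddChooseRatio]

theorem two_mul_sum_alternating_oddChooseRatio (n : ℕ) :
    2 * n * ∑ k ∈ range n, (-1 : ℝ) ^ (n - k) * oddChooseRatio n k =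
      (-1) ^ n * (2 * n + 1) - (2 * n + 1) := by
  set G : ℕ → ℝ := fun k => (2 * k + 1) * ((-1) ^ (n - k) * oddChooseRatio n k)
  have hstep : ∀ k ∈ range n,
      2 * n * ((-1 : ℝ) ^ (n - k) * oddChooseRatio n k) = G k - G (k + 1) := by
    intro k hk
    have hk : k < n := mem_range.mp hk
    have hrec := oddChooseRatio_succ n k hk
    simp only [G]
    rw [show n - k = n - (k + 1) + 1 by omega, pow_succ]
    push_cast
    linear_combination (-1 : ℝ) ^ (n - (k + 1)) * hrec
  rw [mul_sum, sum_congr rfl hstep, sum_range_sub']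
  simp [G, oddChooseRatio_zero, oddChooseRatio_self]

theorem stmt_18 (n : ℕ) (hn : 1 ≤ n) :
    ∑ k ∈ range (n + 1),
        (-1 : ℝ) ^ (n - k) * (Nat.choose (2 * n + 1) (2 * k + 1) : ℝ) / (Nat.choose n k : ℝ) =
      ((-1 : ℝ) ^ n * (2 * (n : ℝ) + 1) - 1) / (2 * (n : ℝ)) := by
  have hn0 : (2 * n : ℝ) ≠ 0 := by exact_mod_cast (by omega : 2 * n ≠ 0)
  simp_rw [mul_div_assoc]
  change ∑ k ∈ range (n + 1), (-1 : ℝ) ^ (n - k) * oddChooseRatio n k = _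
  rw [sum_range_succ, Nat.sub_self, pow_zero, oddChooseRatio_self, eq_div_iff hn0]
  linear_combination two_mul_sum_alternating_oddChooseRatio n
end

section
/- For every natural number n, ∑_{k=0}^{n} (−1)^k · (4^k / (2k+1)) · (C(n,k) / C(2k,k)) = 1/(2n+1), as an identity of real numbers. -/
/-!
Since `∫_{-1}^{1} (1 - u²)^k du = 2 · 4^k / ((2k + 1) C(2k, k))` (a Wallis integral, via
`u = cos θ`), the sum is `½ ∫_{-1}^{1} ∑_k C(n, k) (u² - 1)^k du = ½ ∫_{-1}^{1} u^{2n} du` by the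
binomial theorem.
-/

open Finset

theorem prod_range_div_eq_four_pow_div_centralBinom (k : ℕ) :
    ∏ i ∈ range k, (2 * (i : ℝ) + 2) / (2 * i + 3) =
      4 ^ k / ((2 * k + 1) * k.centralBinom) := by
  induction k with
  | zero => simp
  | succ k ih =>
    have hrec : ((k : ℝ) + 1) * (k + 1).centralBinom = 2 * (2 * k + 1) * k.centralBinom := by
      exact_mod_cast Nat.succ_mul_centralBinom_succ k
    have hc : ((k + 1).centralBinom : ℝ) ≠ 0 := by exact_mod_cast (Nat.centralBinom_pos _).ne'
    have hc' : (k.centralBinom : ℝ) ≠ 0 := by exact_mod_cast (Nat.centralBinom_pos _).ne'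
    rw [prod_range_succ, ih]
    push_cast
    field_simp
    linear_combination (2 * 4 ^ k * (2 * (k : ℝ) + 3)) * hrec

open Real in
theorem integral_one_sub_sq_pow (k : ℕ) :
    ∫ u in (-1 : ℝ)..1, (1 - u ^ 2) ^ k = 2 * 4 ^ k / ((2 * k + 1) * (k.centralBinom : ℝ)) := by
  have h := integral_sin_pow_odd_mul_cos_pow (a := 0) (b := π) k 0
  simp only [pow_zero, mul_one, one_mul, cos_pi, cos_zero] at h
  rw [← h, integral_sin_pow_odd, prod_range_div_eq_four_pow_div_centralBinom, mul_div_assoc]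

theorem integral_neg_one_one_pow_two_mul (n : ℕ) :
    ∫ u in (-1 : ℝ)..1, u ^ (2 * n) = 2 / (2 * n + 1) := by
  rw [integral_pow, pow_succ (-1 : ℝ), (even_two_mul n).neg_one_pow]
  push_cast
  ring

theorem stmt_19 (n : ℕ) :
    ∑ k ∈ range (n + 1),
        (-1 : ℝ) ^ k * (4 ^ k / (2 * (k : ℝ) + 1)) *
          ((Nat.choose n k : ℝ) / (Nat.choose (2 * k) k : ℝ)) =
      1 / (2 * (n : ℝ) + 1) := by
  have hterm (k : ℕ) : (-1 : ℝ) ^ k * (4 ^ k / (2 * (k : ℝ) + 1)) *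
      ((Nat.choose n k : ℝ) / (Nat.choose (2 * k) k : ℝ)) =
        (∫ u in (-1 : ℝ)..1, (u ^ 2 - 1) ^ k * n.choose k) / 2 := by
    have hneg (u : ℝ) : (u ^ 2 - 1) ^ k = (-1) ^ k * (1 - u ^ 2) ^ k := by
      rw [← mul_pow]; ring
    simp only [hneg, intervalIntegral.integral_mul_const, intervalIntegral.integral_const_mul,
      integral_one_sub_sq_pow, Nat.centralBinom]
    field_simp
  have hbinom (u : ℝ) : ∑ k ∈ range (n + 1), (u ^ 2 - 1) ^ k * n.choose k = u ^ (2 * n) := by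
    have h := add_pow (u ^ 2 - 1) 1 n
    simp only [one_pow, mul_one, sub_add_cancel, ← pow_mul] at h
    exact h.symm
  simp_rw [hterm, ← sum_div]
  rw [← intervalIntegral.integral_finsetSum fun k _ =>
    (by fun_prop : Continuous _).intervalIntegrable _ _]
  simp_rw [hbinom, integral_neg_one_one_pow_two_mul]
  ring
end
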